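/- arXiv:1410.3068 — 5 statements merged into one kernel-verified Lean document; each statement's English description precedes it below -/
import Mathlib

section
/- Let γ, ε > 0 with ε < (√2 − 1)γ and define b₁, b₂, b₃, b₄ as in the lossless dual-NOPA system. For real m, n define f(m,n) = 2(b₁ + 2b₂ cos m cos n + b₃ cos 2m)/(b₄ − b₃ cos 2m) − 2(b₁ + 2b₂ + b₃)/(b₄ − b₃). Then f(m,n) ≥ 0 for all m, n, with equality when m = n = 0. -/
/-!
With `x = cos m`, `y = cos n` and `cos 2m = 2x² - 1`, clearing the (positive) denominators turns
`f ≥ 0` into a polynomial inequality whose defect is, identically,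
`-b₂ (b₄ - b₃) ((x - y)² + (1 - y²)) + (1 - x²) (-b₂ (b₄ + 3 b₃) - 2 b₃ (b₁ + b₄))`.
For the dual-NOPA coefficients `b₄ - b₃ = (ε⁴ - 6ε²γ² + γ⁴)²` and the second bracket equals
`-b₂ (ε² + 2εγ - γ²)⁴`, so everything reduces to `b₂ ≤ 0`, i.e. `ε < γ`. The stability condition
`ε < (√2 - 1) γ` makes `ε⁴ - 6ε²γ² + γ⁴ = (ε² + 2εγ - γ²)(ε² - 2εγ - γ²)` nonzero, so the
denominators never vanish.
-/

open Real

namespace DualNOPA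

theorem cross_mul_le {b₁ b₂ b₃ b₄ x y : ℝ} (hb₂ : b₂ ≤ 0) (hb₃₄ : b₃ ≤ b₄)
    (hkey : 2 * b₃ * (b₁ + b₄) ≤ -b₂ * (b₄ + 3 * b₃)) (hx : x ^ 2 ≤ 1) (hy : y ^ 2 ≤ 1) :
    (b₁ + 2 * b₂ + b₃) * (b₄ - b₃ * (2 * x ^ 2 - 1)) ≤
      (b₁ + 2 * b₂ * x * y + b₃ * (2 * x ^ 2 - 1)) * (b₄ - b₃) := by
  have hdefect : (b₁ + 2 * b₂ * x * y + b₃ * (2 * x ^ 2 - 1)) * (b₄ - b₃) -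
      (b₁ + 2 * b₂ + b₃) * (b₄ - b₃ * (2 * x ^ 2 - 1)) =
      -b₂ * (b₄ - b₃) * ((x - y) ^ 2 + (1 - y ^ 2)) +
        (1 - x ^ 2) * (-b₂ * (b₄ + 3 * b₃) - 2 * b₃ * (b₁ + b₄)) := by
    ring
  have hfirst : 0 ≤ -b₂ * (b₄ - b₃) * ((x - y) ^ 2 + (1 - y ^ 2)) :=
    mul_nonneg (mul_nonneg (by linarith) (by linarith)) (by nlinarith [sq_nonneg (x - y)])
  have hsecond : 0 ≤ (1 - x ^ 2) * (-b₂ * (b₄ + 3 * b₃) - 2 * b₃ * (b₁ + b₄)) :=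
    mul_nonneg (by linarith) (by linarith)
  linarith

theorem ratio_at_zero_le {b₁ b₂ b₃ b₄ : ℝ} (hb₂ : b₂ ≤ 0) (hb₃ : 0 ≤ b₃) (hb₃₄ : b₃ < b₄)
    (hkey : 2 * b₃ * (b₁ + b₄) ≤ -b₂ * (b₄ + 3 * b₃)) (m n : ℝ) :
    2 * (b₁ + 2 * b₂ + b₃) / (b₄ - b₃) ≤
      2 * (b₁ + 2 * b₂ * cos m * cos n + b₃ * cos (2 * m)) / (b₄ - b₃ * cos (2 * m)) := by
  have hden : 0 < b₄ - b₃ * cos (2 * m) := by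
    nlinarith [mul_le_mul_of_nonneg_left (cos_le_one (2 * m)) hb₃]
  rw [div_le_div_iff₀ (by linarith) hden, cos_two_mul]
  have := cross_mul_le hb₂ hb₃₄.le hkey (cos_sq_le_one m) (cos_sq_le_one n)
  linarith

theorem sq_add_two_mul_mul_sub_sq_neg {γ ε : ℝ} (hγ : 0 < γ) (hε : 0 < ε)
    (hstab : ε < (√2 - 1) * γ) : ε ^ 2 + 2 * ε * γ - γ ^ 2 < 0 := by
  have hlt : ε + γ < √2 * γ := by linarith
  have hsq : (ε + γ) ^ 2 < (√2 * γ) ^ 2 := pow_lt_pow_left₀ hlt (by positivity) two_ne_zero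
  rw [mul_pow, sq_sqrt zero_le_two] at hsq
  linarith

end DualNOPA

open DualNOPA in
theorem stmt3 (γ ε : ℝ) (hγ : 0 < γ) (hε : 0 < ε)
    (hstab : ε < (Real.sqrt 2 - 1) * γ)
    (b₁ b₂ b₃ b₄ : ℝ)
    (hb₁ : b₁ = ε ^ 8 + 12 * ε ^ 6 * γ ^ 2 - 10 * ε ^ 4 * γ ^ 4 + 12 * ε ^ 2 * γ ^ 6 + γ ^ 8)
    (hb₂ : b₂ = 4 * ε * γ * (ε ^ 2 - γ ^ 2) * (ε ^ 2 + γ ^ 2) ^ 2)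
    (hb₃ : b₃ = 8 * ε ^ 2 * γ ^ 2 * (ε ^ 2 - γ ^ 2) ^ 2)
    (hb₄ : b₄ = ε ^ 8 - 4 * ε ^ 6 * γ ^ 2 + 22 * ε ^ 4 * γ ^ 4 - 4 * ε ^ 2 * γ ^ 6 + γ ^ 8)
    (f : ℝ → ℝ → ℝ)
    (hf : ∀ m n, f m n =
      2 * (b₁ + 2 * b₂ * Real.cos m * Real.cos n + b₃ * Real.cos (2 * m)) /
        (b₄ - b₃ * Real.cos (2 * m)) -
      2 * (b₁ + 2 * b₂ + b₃) / (b₄ - b₃)) :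
    (∀ m n, 0 ≤ f m n) ∧ f 0 0 = 0 := by
  have hroot := sq_add_two_mul_mul_sub_sq_neg hγ hε hstab
  have hεγ : ε < γ := by nlinarith
  have hb₂neg : b₂ ≤ 0 := by
    have hγε : 0 ≤ γ ^ 2 - ε ^ 2 := by nlinarith
    have := mul_nonneg (mul_nonneg (by positivity : (0:ℝ) ≤ 4 * ε * γ) hγε)
      (sq_nonneg (ε ^ 2 + γ ^ 2))
    rw [hb₂]; linarith
  have hb₃nonneg : 0 ≤ b₃ := by rw [hb₃]; positivity
  have hb₃₄ : b₃ < b₄ := by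
    have hgap : b₄ - b₃ = ((ε ^ 2 + 2 * ε * γ - γ ^ 2) * (ε ^ 2 - 2 * ε * γ - γ ^ 2)) ^ 2 := by
      rw [hb₃, hb₄]; ring
    rw [← sub_pos, hgap]
    exact pow_pos (mul_pos_of_neg_of_neg hroot (by nlinarith)) 2
  have hkey : 2 * b₃ * (b₁ + b₄) ≤ -b₂ * (b₄ + 3 * b₃) := by
    have hdiff : -b₂ * (b₄ + 3 * b₃) - 2 * b₃ * (b₁ + b₄) =
        -b₂ * (ε ^ 2 + 2 * ε * γ - γ ^ 2) ^ 4 := by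
      rw [hb₁, hb₂, hb₃, hb₄]; ring
    have : 0 ≤ -b₂ * (ε ^ 2 + 2 * ε * γ - γ ^ 2) ^ 4 :=
      mul_nonneg (neg_nonneg.2 hb₂neg) (by positivity)
    linarith
  refine ⟨fun m n => ?_, by simp [hf]⟩
  rw [hf, sub_nonneg]
  exact ratio_at_zero_le hb₂neg hb₃nonneg hb₃₄ hkey m n
end

section
/- Let γ, ε > 0 with ε < (√2 − 1)γ and define b₁, b₂, b₃, b₄ as in the lossless dual-NOPA system. Define V(m) = 2(b₁ + 2b₂ cos m + b₃ cos 2m)/(b₄ − b₃ cos 2m) for m ∈ (−π/2, π/2). Then V(m) ≥ V(0) = 2(b₁ + 2b₂ + b₃)/(b₄ − b₃) and V(m) ≤ 2 for all m ∈ (−π/2, π/2), with V(m) → 2 as m → ±π/2. -/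
/-!
Writing `c = cos m`, so that `cos 2m = 2c² - 1`, the spectrum is `V(m) = 2 N(c) / D(c)` with `N`, `D`
quadratic in `c`. Two polynomial identities carry the whole argument:
`D(c) - N(c) = 8 p c B(c)` and `N(c) D(1) - N(1) D(c) = 8 p (ε² + γ²)² s² (1 - c) B(c)`, where
`p = εγ(γ² - ε²)`, `s = γ² - 2εγ - ε²` and `B(c) = s² + 4p(1 - c)`. For `0 ≤ ε ≤ γ` and `0 ≤ c ≤ 1`
both right-hand sides are nonnegative, and `D` stays positive since `D(c) ≥ b₄ - b₃ = (ε⁴ - 6ε²γ² + γ⁴)²`.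
At `m = ±π/2` we have `c = 0`, where `N = D`.
-/

open Real Filter Set Topology

namespace DualNOPA

variable (ε γ : ℝ)

def b₁ : ℝ := ε ^ 8 + 12 * ε ^ 6 * γ ^ 2 - 10 * ε ^ 4 * γ ^ 4 + 12 * ε ^ 2 * γ ^ 6 + γ ^ 8

def b₂ : ℝ := 4 * ε * γ * (ε ^ 2 - γ ^ 2) * (ε ^ 2 + γ ^ 2) ^ 2

def b₃ : ℝ := 8 * ε ^ 2 * γ ^ 2 * (ε ^ 2 - γ ^ 2) ^ 2

def b₄ : ℝ := ε ^ 8 - 4 * ε ^ 6 * γ ^ 2 + 22 * ε ^ 4 * γ ^ 4 - 4 * ε ^ 2 * γ ^ 6 + γ ^ 8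

def numer (c : ℝ) : ℝ := b₁ ε γ + 2 * b₂ ε γ * c + b₃ ε γ * (2 * c ^ 2 - 1)

def denom (c : ℝ) : ℝ := b₄ ε γ - b₃ ε γ * (2 * c ^ 2 - 1)

noncomputable def squeezingSpectrum (m : ℝ) : ℝ := 2 * numer ε γ (cos m) / denom ε γ (cos m)

theorem denom_sub_numer (c : ℝ) :
    denom ε γ c - numer ε γ c = 8 * (ε * γ * (γ ^ 2 - ε ^ 2)) * c *
      ((γ ^ 2 - 2 * ε * γ - ε ^ 2) ^ 2 + 4 * (ε * γ * (γ ^ 2 - ε ^ 2)) * (1 - c)) := by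
  simp only [numer, denom, b₁, b₂, b₃, b₄]
  ring

theorem numer_mul_denom_one_sub (c : ℝ) :
    numer ε γ c * denom ε γ 1 - numer ε γ 1 * denom ε γ c =
      8 * (ε * γ * (γ ^ 2 - ε ^ 2)) * (ε ^ 2 + γ ^ 2) ^ 2 * (γ ^ 2 - 2 * ε * γ - ε ^ 2) ^ 2 *
        (1 - c) * ((γ ^ 2 - 2 * ε * γ - ε ^ 2) ^ 2 + 4 * (ε * γ * (γ ^ 2 - ε ^ 2)) * (1 - c)) := by
  simp only [numer, denom, b₁, b₂, b₃, b₄]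
  ring

theorem denom_pos (hq : ε ^ 4 - 6 * ε ^ 2 * γ ^ 2 + γ ^ 4 ≠ 0) {c : ℝ} (hc : |c| ≤ 1) :
    0 < denom ε γ c := by
  have hc2 : 2 * c ^ 2 - 1 ≤ 1 := by nlinarith [sq_abs c, abs_nonneg c]
  have hb₃ : 0 ≤ b₃ ε γ := by unfold b₃; positivity
  have hgap : b₄ ε γ - b₃ ε γ = (ε ^ 4 - 6 * ε ^ 2 * γ ^ 2 + γ ^ 4) ^ 2 := by
    simp only [b₃, b₄]; ring
  have : 0 < b₄ ε γ - b₃ ε γ := hgap ▸ by positivity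
  unfold denom
  nlinarith [mul_le_mul_of_nonneg_left hc2 hb₃]

variable {ε γ}

theorem coupling_nonneg (hε : 0 ≤ ε) (hεγ : ε ≤ γ) : 0 ≤ ε * γ * (γ ^ 2 - ε ^ 2) :=
  mul_nonneg (mul_nonneg hε (hε.trans hεγ)) (sub_nonneg.2 (pow_le_pow_left₀ hε hεγ 2))

theorem gap_nonneg (hε : 0 ≤ ε) (hεγ : ε ≤ γ) {c : ℝ} (hc : c ≤ 1) :
    0 ≤ (γ ^ 2 - 2 * ε * γ - ε ^ 2) ^ 2 + 4 * (ε * γ * (γ ^ 2 - ε ^ 2)) * (1 - c) := by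
  have := coupling_nonneg hε hεγ
  have : 0 ≤ 1 - c := sub_nonneg.2 hc
  positivity

theorem numer_le_denom (hε : 0 ≤ ε) (hεγ : ε ≤ γ) {c : ℝ} (hc₀ : 0 ≤ c) (hc₁ : c ≤ 1) :
    numer ε γ c ≤ denom ε γ c := by
  have := coupling_nonneg hε hεγ
  have := gap_nonneg hε hεγ hc₁
  exact sub_nonneg.1 (by rw [denom_sub_numer]; positivity)

theorem numer_one_mul_le (hε : 0 ≤ ε) (hεγ : ε ≤ γ) {c : ℝ} (hc : c ≤ 1) :
    numer ε γ 1 * denom ε γ c ≤ numer ε γ c * denom ε γ 1 := by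
  have := coupling_nonneg hε hεγ
  have := gap_nonneg hε hεγ hc
  have : 0 ≤ 1 - c := sub_nonneg.2 hc
  exact sub_nonneg.1 (by rw [numer_mul_denom_one_sub]; positivity)

theorem numer_zero : numer ε γ 0 = denom ε γ 0 := by
  linarith [denom_sub_numer ε γ 0]

theorem squeezingSpectrum_zero :
    squeezingSpectrum ε γ 0 = 2 * (b₁ ε γ + 2 * b₂ ε γ + b₃ ε γ) / (b₄ ε γ - b₃ ε γ) := by
  simp only [squeezingSpectrum, numer, denom, cos_zero]
  ring_nf

theorem squeezingSpectrum_zero_le (hε : 0 ≤ ε) (hεγ : ε ≤ γ)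
    (hq : ε ^ 4 - 6 * ε ^ 2 * γ ^ 2 + γ ^ 4 ≠ 0) (m : ℝ) :
    squeezingSpectrum ε γ 0 ≤ squeezingSpectrum ε γ m := by
  unfold squeezingSpectrum
  rw [cos_zero, mul_div_assoc, mul_div_assoc]
  refine mul_le_mul_of_nonneg_left ?_ zero_le_two
  rw [div_le_div_iff₀ (denom_pos ε γ hq (by simp)) (denom_pos ε γ hq (abs_cos_le_one m))]
  exact numer_one_mul_le hε hεγ (cos_le_one m)

theorem squeezingSpectrum_le_two (hε : 0 ≤ ε) (hεγ : ε ≤ γ)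
    (hq : ε ^ 4 - 6 * ε ^ 2 * γ ^ 2 + γ ^ 4 ≠ 0) {m : ℝ} (hm : m ∈ Ioo (-(π / 2)) (π / 2)) :
    squeezingSpectrum ε γ m ≤ 2 := by
  unfold squeezingSpectrum
  rw [div_le_iff₀ (denom_pos ε γ hq (abs_cos_le_one m))]
  gcongr
  exact numer_le_denom hε hεγ (cos_nonneg_of_mem_Icc (Ioo_subset_Icc_self hm)) (cos_le_one m)

theorem continuous_squeezingSpectrum (hq : ε ^ 4 - 6 * ε ^ 2 * γ ^ 2 + γ ^ 4 ≠ 0) :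
    Continuous (squeezingSpectrum ε γ) := by
  refine Continuous.div (by unfold numer; fun_prop) (by unfold denom; fun_prop) fun m => ?_
  exact (denom_pos ε γ hq (abs_cos_le_one m)).ne'

theorem tendsto_squeezingSpectrum_of_cos_eq_zero (hq : ε ^ 4 - 6 * ε ^ 2 * γ ^ 2 + γ ^ 4 ≠ 0)
    {a : ℝ} (ha : cos a = 0) : Tendsto (squeezingSpectrum ε γ) (𝓝 a) (𝓝 2) := by
  have h := (continuous_squeezingSpectrum hq).tendsto a
  rwa [squeezingSpectrum, ha, numer_zero, mul_div_assoc,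
    div_self (denom_pos ε γ hq (by simp)).ne', mul_one] at h

end DualNOPA

theorem sq_sub_two_mul_mul_sub_sq_pos {ε γ : ℝ} (hε : 0 ≤ ε) (h : ε < (√2 - 1) * γ) :
    0 < γ ^ 2 - 2 * ε * γ - ε ^ 2 := by
  have hγ : 0 ≤ γ := by nlinarith [one_lt_sqrt_two]
  have hsq : (ε + γ) ^ 2 < (√2 * γ) ^ 2 := pow_lt_pow_left₀ (by linarith) (by positivity) two_ne_zero
  nlinarith [sq_sqrt (zero_le_two : (0 : ℝ) ≤ 2)]

open Real Filter Set in
theorem stmt5_general (γ ε : ℝ) (hε : 0 < ε)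
    (hstab : ε < (Real.sqrt 2 - 1) * γ)
    (b₁ b₂ b₃ b₄ : ℝ)
    (hb₁ : b₁ = ε ^ 8 + 12 * ε ^ 6 * γ ^ 2 - 10 * ε ^ 4 * γ ^ 4 + 12 * ε ^ 2 * γ ^ 6 + γ ^ 8)
    (hb₂ : b₂ = 4 * ε * γ * (ε ^ 2 - γ ^ 2) * (ε ^ 2 + γ ^ 2) ^ 2)
    (hb₃ : b₃ = 8 * ε ^ 2 * γ ^ 2 * (ε ^ 2 - γ ^ 2) ^ 2)
    (hb₄ : b₄ = ε ^ 8 - 4 * ε ^ 6 * γ ^ 2 + 22 * ε ^ 4 * γ ^ 4 - 4 * ε ^ 2 * γ ^ 6 + γ ^ 8)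
    (V : ℝ → ℝ)
    (hV : ∀ m, V m =
      2 * (b₁ + 2 * b₂ * Real.cos m + b₃ * Real.cos (2 * m)) /
        (b₄ - b₃ * Real.cos (2 * m))) :
    (∀ m ∈ Ioo (-(π / 2)) (π / 2), V 0 ≤ V m) ∧
    V 0 = 2 * (b₁ + 2 * b₂ + b₃) / (b₄ - b₃) ∧
    (∀ m ∈ Ioo (-(π / 2)) (π / 2), V m ≤ 2) ∧
    Tendsto V (nhdsWithin (π / 2) (Iio (π / 2))) (nhds 2) ∧
    Tendsto V (nhdsWithin (-(π / 2)) (Ioi (-(π / 2)))) (nhds 2) := by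
  subst hb₁ hb₂ hb₃ hb₄
  obtain rfl : V = DualNOPA.squeezingSpectrum ε γ := funext fun m => by
    rw [hV, cos_two_mul]; rfl
  have hs := sq_sub_two_mul_mul_sub_sq_pos hε.le hstab
  have hεγ : ε ≤ γ := by nlinarith [one_lt_sqrt_two, sqrt_two_lt_three_halves]
  have hq : ε ^ 4 - 6 * ε ^ 2 * γ ^ 2 + γ ^ 4 ≠ 0 := by
    have hfactor : ε ^ 4 - 6 * ε ^ 2 * γ ^ 2 + γ ^ 4 =
        (γ ^ 2 - 2 * ε * γ - ε ^ 2) * (γ ^ 2 + 2 * ε * γ - ε ^ 2) := by ring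
    rw [hfactor]
    exact (mul_pos hs (by nlinarith)).ne'
  refine ⟨fun m _ => DualNOPA.squeezingSpectrum_zero_le hε.le hεγ hq m,
    DualNOPA.squeezingSpectrum_zero, fun m hm => DualNOPA.squeezingSpectrum_le_two hε.le hεγ hq hm,
    ?_, ?_⟩
  · exact (DualNOPA.tendsto_squeezingSpectrum_of_cos_eq_zero hq cos_pi_div_two).mono_left
      nhdsWithin_le_nhds
  · exact (DualNOPA.tendsto_squeezingSpectrum_of_cos_eq_zero hq
      (by rw [cos_neg, cos_pi_div_two])).mono_left nhdsWithin_le_nhds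

open Real Filter Set in
theorem stmt5 (γ ε : ℝ) (hγ : 0 < γ) (hε : 0 < ε)
    (hstab : ε < (Real.sqrt 2 - 1) * γ)
    (b₁ b₂ b₃ b₄ : ℝ)
    (hb₁ : b₁ = ε ^ 8 + 12 * ε ^ 6 * γ ^ 2 - 10 * ε ^ 4 * γ ^ 4 + 12 * ε ^ 2 * γ ^ 6 + γ ^ 8)
    (hb₂ : b₂ = 4 * ε * γ * (ε ^ 2 - γ ^ 2) * (ε ^ 2 + γ ^ 2) ^ 2)
    (hb₃ : b₃ = 8 * ε ^ 2 * γ ^ 2 * (ε ^ 2 - γ ^ 2) ^ 2)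
    (hb₄ : b₄ = ε ^ 8 - 4 * ε ^ 6 * γ ^ 2 + 22 * ε ^ 4 * γ ^ 4 - 4 * ε ^ 2 * γ ^ 6 + γ ^ 8)
    (V : ℝ → ℝ)
    (hV : ∀ m, V m =
      2 * (b₁ + 2 * b₂ * Real.cos m + b₃ * Real.cos (2 * m)) /
        (b₄ - b₃ * Real.cos (2 * m))) :
    (∀ m ∈ Ioo (-(π / 2)) (π / 2), V 0 ≤ V m) ∧
    V 0 = 2 * (b₁ + 2 * b₂ + b₃) / (b₄ - b₃) ∧
    (∀ m ∈ Ioo (-(π / 2)) (π / 2), V m ≤ 2) ∧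
    Tendsto V (nhdsWithin (π / 2) (Iio (π / 2))) (nhds 2) ∧
    Tendsto V (nhdsWithin (-(π / 2)) (Ioi (-(π / 2)))) (nhds 2) :=
  stmt5_general γ ε hε hstab b₁ b₂ b₃ b₄ hb₁ hb₂ hb₃ hb₄ V hV
end

section
/- Let γ > 0, κ ≥ 0, ε > 0, 0 < α ≤ 1 with ε < γ and κ² < ε² + γ². Define c₂ = 4αεγ(−κ² + ε² + γ²)(−κ⁴ − 4κ³γ − 6κ²γ² + 4α²κε²γ + ε⁴ − 4κγ³ − γ⁴). Then c₂ < 0. Equivalently, c₂ = 4αεγ·d₁·d₂ with d₁ = ε² + γ² − κ² > 0 and d₂ = ε⁴ − γ⁴ − 4κγ(γ² − α²ε²) − 6κ²γ² − 4κ³γ − κ⁴ < 0. -/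
/-! Up to sign, `d₂` is `(κ + γ)⁴ - ε⁴ - 4α²κγε²`: expanding `(κ + γ)⁴` shows it exceeds
`γ⁴ + 4κγ³`, which beats `ε⁴ + 4α²κγε²` term by term because `αε ≤ ε < γ`. So `d₂ < 0`,
`d₁ > 0` is the hypothesis on `κ`, and the prefactor `4αεγ` is positive. -/

lemma pow_four_add_lt_add_pow_four {α ε γ κ : ℝ} (hκ : 0 ≤ κ) (hγ : 0 < γ)
    (hε : ε ^ 4 < γ ^ 4) (hαε : α ^ 2 * ε ^ 2 ≤ γ ^ 2) :
    ε ^ 4 + 4 * κ * γ * (α ^ 2 * ε ^ 2) < (κ + γ) ^ 4 :=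
  calc ε ^ 4 + 4 * κ * γ * (α ^ 2 * ε ^ 2) < γ ^ 4 + 4 * κ * γ * γ ^ 2 :=
        add_lt_add_of_lt_of_le hε (by gcongr)
    _ ≤ γ ^ 4 + 4 * κ * γ * γ ^ 2 + (6 * κ ^ 2 * γ ^ 2 + 4 * κ ^ 3 * γ + κ ^ 4) :=
        le_add_of_nonneg_right (by positivity)
    _ = (κ + γ) ^ 4 := by ring

theorem stmt9 (γ κ ε α : ℝ) (hγ : 0 < γ) (hκ : 0 ≤ κ) (hε : 0 < ε)
    (hα₁ : 0 < α) (hα₂ : α ≤ 1) (hεγ : ε < γ) (hκ' : κ ^ 2 < ε ^ 2 + γ ^ 2)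
    (c₂ d₁ d₂ : ℝ)
    (hc₂ : c₂ = 4 * α * ε * γ * (-κ ^ 2 + ε ^ 2 + γ ^ 2) *
      (-κ ^ 4 - 4 * κ ^ 3 * γ - 6 * κ ^ 2 * γ ^ 2 + 4 * α ^ 2 * κ * ε ^ 2 * γ
        + ε ^ 4 - 4 * κ * γ ^ 3 - γ ^ 4))
    (hd₁ : d₁ = ε ^ 2 + γ ^ 2 - κ ^ 2)
    (hd₂ : d₂ = ε ^ 4 - γ ^ 4 - 4 * κ * γ * (γ ^ 2 - α ^ 2 * ε ^ 2)
      - 6 * κ ^ 2 * γ ^ 2 - 4 * κ ^ 3 * γ - κ ^ 4) :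
    c₂ < 0 ∧ c₂ = 4 * α * ε * γ * d₁ * d₂ ∧ 0 < d₁ ∧ d₂ < 0 := by
  have hd₁_pos : 0 < d₁ := by rw [hd₁]; linarith
  have hαε : α ^ 2 * ε ^ 2 ≤ γ ^ 2 :=
    calc α ^ 2 * ε ^ 2 ≤ ε ^ 2 := mul_le_of_le_one_left (by positivity) (pow_le_one₀ hα₁.le hα₂)
      _ ≤ γ ^ 2 := by gcongr
  have hd₂_neg : d₂ < 0 := by
    have := pow_four_add_lt_add_pow_four hκ hγ (by gcongr) hαε
    rw [hd₂]
    linarith [show (κ + γ) ^ 4 = γ ^ 4 + 4 * κ * γ ^ 3 + 6 * κ ^ 2 * γ ^ 2 + 4 * κ ^ 3 * γ + κ ^ 4 by ring]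
  have hc₂_eq : c₂ = 4 * α * ε * γ * d₁ * d₂ := by rw [hc₂, hd₁, hd₂]; ring
  refine ⟨?_, hc₂_eq, hd₁_pos, hd₂_neg⟩
  rw [hc₂_eq]
  exact mul_neg_of_pos_of_neg (by positivity) hd₂_neg
end

section
/- Let γ > 0, κ ≥ 0, ε > 0, 0 < α ≤ 1 with ε ≤ γ. Define c₁, c₃, c₄, c₅ as in the lossy dual-NOPA system and d₃ = (κ² + γ² − ε²)² + 4κ²γ² + 4α²ε²γ² + 4κ³γ + 4κγ(γ² − ε²). Then (c₁ − c₃) − (c₄ + c₅) = 8ε²γ((1 + α²)κ + (1 − α²)γ)·d₃. Consequently, if κ > 0 or α < 1, then c₁ − c₃ > c₄ + c₅, i.e., 2(c₁ − c₃)/(c₄ + c₅) > 2. -/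
/-!
The spectrum coefficients collapse under `ring`: `c₄ + c₅` is the perfect square
`(((κ + γ)² - ε²)² + 4α²ε²γ²)²`, and `(c₁ - c₃) - (c₄ + c₅)` factors as
`8ε²γ ((1 + α²)κ + (1 - α²)γ) d₃`. For `ε ≤ γ` every summand of `d₃` is nonnegative and
`4α²ε²γ² > 0`, while the loss factor `(1 + α²)κ + (1 - α²)γ` is positive as soon as `κ > 0`
or `α < 1`; so the difference is positive and the spectrum exceeds `2`.
-/

namespace DualNOPA

noncomputable section

variable (γ κ ε α : ℝ)

def c₁ : ℝ :=
  4 * α ^ 4 * ε ^ 2 * γ ^ 2 *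
      (κ ^ 4 + 8 * κ * ε ^ 2 * γ + (ε ^ 2 - γ ^ 2) ^ 2 - 2 * κ ^ 2 * (ε ^ 2 + γ ^ 2))
    + α ^ 2 * (-κ ^ 2 + ε ^ 2 + γ ^ 2) ^ 2 *
      (κ ^ 4 + 4 * κ ^ 3 * γ - 2 * κ ^ 2 * (ε ^ 2 - 3 * γ ^ 2)
        + 4 * κ * γ * (ε ^ 2 + γ ^ 2) + ε ^ 4
        + 2 * (1 + 2 * (1 - α ^ 2)) * ε ^ 2 * γ ^ 2 + γ ^ 4)
    + (κ ^ 2 - ε ^ 2 + 2 * κ * γ + γ ^ 2) ^ 2 *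
      (4 * γ * (κ + γ) * (κ ^ 2 + ε ^ 2 + κ * γ)
        + (1 - α ^ 2) * (-κ ^ 2 + ε ^ 2 + γ ^ 2) ^ 2)

def c₃ : ℝ :=
  8 * α ^ 2 * ε ^ 2 * γ ^ 2 * (-κ + ε - γ) * (κ + ε + γ) *
    (3 * κ ^ 2 + 2 * κ * γ + ε ^ 2 - γ ^ 2)

def c₄ : ℝ :=
  κ ^ 8 + 8 * κ ^ 7 * γ - 4 * κ ^ 6 * (ε ^ 2 - 7 * γ ^ 2)
    - 8 * κ ^ 5 * (3 * ε ^ 2 * γ - 7 * γ ^ 3)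
    + κ ^ 4 * (6 * ε ^ 4 - 60 * ε ^ 2 * γ ^ 2 + 70 * γ ^ 4)
    + 8 * κ ^ 3 * (3 * ε ^ 4 * γ - 10 * ε ^ 2 * γ ^ 3 + 7 * γ ^ 5)
    - 4 * κ ^ 2 * (ε ^ 2 - 7 * γ ^ 2) * (ε ^ 2 - γ ^ 2) ^ 2
    + 8 * κ * γ * (-ε ^ 2 + γ ^ 2) ^ 3
    + ε ^ 8 - 4 * ε ^ 6 * γ ^ 2 + 2 * (3 + 8 * α ^ 4) * ε ^ 4 * γ ^ 4
    - 4 * ε ^ 2 * γ ^ 6 + γ ^ 8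

def c₅ : ℝ :=
  8 * α ^ 2 * ε ^ 2 * γ ^ 2 * (κ ^ 2 + 2 * κ * γ - ε ^ 2 + γ ^ 2) ^ 2

def d₃ : ℝ :=
  (κ ^ 2 + γ ^ 2 - ε ^ 2) ^ 2 + 4 * κ ^ 2 * γ ^ 2 + 4 * α ^ 2 * ε ^ 2 * γ ^ 2
    + 4 * κ ^ 3 * γ + 4 * κ * γ * (γ ^ 2 - ε ^ 2)

def lossFactor : ℝ :=
  (1 + α ^ 2) * κ + (1 - α ^ 2) * γ

theorem c₄_add_c₅_eq_sq :
    c₄ γ κ ε α + c₅ γ κ ε α = (((κ + γ) ^ 2 - ε ^ 2) ^ 2 + 4 * α ^ 2 * ε ^ 2 * γ ^ 2) ^ 2 := by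
  unfold c₄ c₅; ring

theorem c₁_sub_c₃_sub_c₄_add_c₅ :
    (c₁ γ κ ε α - c₃ γ κ ε α) - (c₄ γ κ ε α + c₅ γ κ ε α) =
      8 * ε ^ 2 * γ * lossFactor γ κ α * d₃ γ κ ε α := by
  unfold c₁ c₃ c₄ c₅ lossFactor d₃; ring

variable {γ κ ε α}

theorem c₄_add_c₅_pos (hγ : 0 < γ) (hε : 0 < ε) (hα : 0 < α) :
    0 < c₄ γ κ ε α + c₅ γ κ ε α := by
  rw [c₄_add_c₅_eq_sq]; positivity

theorem d₃_pos (hγ : 0 < γ) (hκ : 0 ≤ κ) (hε : 0 < ε) (hα : 0 < α) (hεγ : ε ≤ γ) :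
    0 < d₃ γ κ ε α := by
  have hsq : 0 ≤ γ ^ 2 - ε ^ 2 := sub_nonneg.2 (pow_le_pow_left₀ hε.le hεγ 2)
  have : 0 ≤ 4 * κ * γ * (γ ^ 2 - ε ^ 2) := mul_nonneg (by positivity) hsq
  unfold d₃
  have : 0 < 4 * α ^ 2 * ε ^ 2 * γ ^ 2 := by positivity
  have : 0 ≤ (κ ^ 2 + γ ^ 2 - ε ^ 2) ^ 2 + 4 * κ ^ 2 * γ ^ 2 + 4 * κ ^ 3 * γ := by positivity
  linarith

theorem lossFactor_pos (hγ : 0 < γ) (hκ : 0 ≤ κ) (hα₁ : 0 < α) (hα₂ : α ≤ 1)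
    (h : 0 < κ ∨ α < 1) : 0 < lossFactor γ κ α := by
  have hα_sq : α ^ 2 ≤ 1 := pow_le_one₀ hα₁.le hα₂
  unfold lossFactor
  rcases h with hκ' | hα'
  · have : 0 ≤ (1 - α ^ 2) * γ := mul_nonneg (by linarith) hγ.le
    have : 0 < (1 + α ^ 2) * κ := by positivity
    linarith
  · have : 0 < (1 - α ^ 2) * γ := mul_pos (by nlinarith) hγ
    have : 0 ≤ (1 + α ^ 2) * κ := by positivity
    linarith

end

end DualNOPA

open DualNOPA in
theorem stmt10 (γ κ ε α : ℝ) (hγ : 0 < γ) (hκ : 0 ≤ κ) (hε : 0 < ε)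
    (hα₁ : 0 < α) (hα₂ : α ≤ 1) (hεγ : ε ≤ γ)
    (c₁ c₃ c₄ c₅ d₃ : ℝ)
    (hc₁ : c₁ = 4 * α ^ 4 * ε ^ 2 * γ ^ 2 *
        (κ ^ 4 + 8 * κ * ε ^ 2 * γ + (ε ^ 2 - γ ^ 2) ^ 2 - 2 * κ ^ 2 * (ε ^ 2 + γ ^ 2))
      + α ^ 2 * (-κ ^ 2 + ε ^ 2 + γ ^ 2) ^ 2 *
        (κ ^ 4 + 4 * κ ^ 3 * γ - 2 * κ ^ 2 * (ε ^ 2 - 3 * γ ^ 2)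
          + 4 * κ * γ * (ε ^ 2 + γ ^ 2) + ε ^ 4
          + 2 * (1 + 2 * (1 - α ^ 2)) * ε ^ 2 * γ ^ 2 + γ ^ 4)
      + (κ ^ 2 - ε ^ 2 + 2 * κ * γ + γ ^ 2) ^ 2 *
        (4 * γ * (κ + γ) * (κ ^ 2 + ε ^ 2 + κ * γ)
          + (1 - α ^ 2) * (-κ ^ 2 + ε ^ 2 + γ ^ 2) ^ 2))
    (hc₃ : c₃ = 8 * α ^ 2 * ε ^ 2 * γ ^ 2 * (-κ + ε - γ) * (κ + ε + γ) *
      (3 * κ ^ 2 + 2 * κ * γ + ε ^ 2 - γ ^ 2))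
    (hc₄ : c₄ = κ ^ 8 + 8 * κ ^ 7 * γ - 4 * κ ^ 6 * (ε ^ 2 - 7 * γ ^ 2)
      - 8 * κ ^ 5 * (3 * ε ^ 2 * γ - 7 * γ ^ 3)
      + κ ^ 4 * (6 * ε ^ 4 - 60 * ε ^ 2 * γ ^ 2 + 70 * γ ^ 4)
      + 8 * κ ^ 3 * (3 * ε ^ 4 * γ - 10 * ε ^ 2 * γ ^ 3 + 7 * γ ^ 5)
      - 4 * κ ^ 2 * (ε ^ 2 - 7 * γ ^ 2) * (ε ^ 2 - γ ^ 2) ^ 2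
      + 8 * κ * γ * (-ε ^ 2 + γ ^ 2) ^ 3
      + ε ^ 8 - 4 * ε ^ 6 * γ ^ 2 + 2 * (3 + 8 * α ^ 4) * ε ^ 4 * γ ^ 4
      - 4 * ε ^ 2 * γ ^ 6 + γ ^ 8)
    (hc₅ : c₅ = 8 * α ^ 2 * ε ^ 2 * γ ^ 2 * (κ ^ 2 + 2 * κ * γ - ε ^ 2 + γ ^ 2) ^ 2)
    (hd₃ : d₃ = (κ ^ 2 + γ ^ 2 - ε ^ 2) ^ 2 + 4 * κ ^ 2 * γ ^ 2 + 4 * α ^ 2 * ε ^ 2 * γ ^ 2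
      + 4 * κ ^ 3 * γ + 4 * κ * γ * (γ ^ 2 - ε ^ 2)) :
    (c₁ - c₃) - (c₄ + c₅) =
      8 * ε ^ 2 * γ * ((1 + α ^ 2) * κ + (1 - α ^ 2) * γ) * d₃ ∧
    ((0 < κ ∨ α < 1) → c₄ + c₅ < c₁ - c₃ ∧ 2 < 2 * (c₁ - c₃) / (c₄ + c₅)) := by
  subst hc₁ hc₃ hc₄ hc₅ hd₃
  have key := c₁_sub_c₃_sub_c₄_add_c₅ γ κ ε α
  refine ⟨key, fun h => ?_⟩
  have hden := c₄_add_c₅_pos (κ := κ) hγ hε hα₁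
  have hgap : 0 < 8 * ε ^ 2 * γ * lossFactor γ κ α * d₃ γ κ ε α :=
    mul_pos (mul_pos (by positivity) (lossFactor_pos hγ hκ hα₁ hα₂ h)) (d₃_pos hγ hκ hε hα₁ hεγ)
  have hlt := sub_pos.1 (key ▸ hgap)
  refine ⟨hlt, ?_⟩
  rw [mul_div_assoc]
  exact lt_mul_of_one_lt_right two_pos ((one_lt_div hden).2 hlt)
end

section
/- Let γ_r > 0, 0 < x, y ≤ 1, κ ≥ 0, 0 ≤ α ≤ 1, and Δθ ∈ ℝ. Set ε = xγ_r and γ = γ_r/y. Then −(γ+κ)/2 + (1/2)(ε²/2 + αεγ|cos(Δθ/2)| + √(ε⁴/4 + α²ε²γ² + αε³γ|cos(Δθ/2)|))^{1/2} < 0 if and only if x·y < (1 + yκ/γ_r)² / (√((1 + yκ/γ_r)² + α²) + α|cos(Δθ/2)|). -/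
/-!
Write `ε = t γ` and `γ + κ = B γ` with `t = x y` and `B = 1 + y κ / γ_r`. Both sides are
homogeneous in `γ`, so the stability condition reduces to `gain α c t < B`, with
`c = |cos (Δθ/2)|`. Squaring the two nested square roots away leaves the quartic `(B² - p)² - q`
in `t`, where `p` and `q` are the radicands, and with `s = √(B² + α²)` it factors as
`(B² - t (s + α c)) (B² + t (s - α c))`. The second factor is positive since `s > |α c|`, so
stability is `t (s + α c) < B²`.
-/

namespace DualNOPA

open Real

theorem sqrt_lt_iff_pos_and_lt_sq {x y : ℝ} : √x < y ↔ 0 < y ∧ x < y ^ 2 := by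
  refine ⟨fun h => ⟨(sqrt_nonneg x).trans_lt h, ?_⟩, fun ⟨hy, h⟩ => (sqrt_lt' hy).mpr h⟩
  exact (sqrt_lt' ((sqrt_nonneg x).trans_lt h)).mp h

theorem sqrt_add_sqrt_lt_iff {p q G : ℝ} (hG : 0 < G) :
    √(p + √q) < G ↔ 0 < G ^ 2 - p ∧ q < (G ^ 2 - p) ^ 2 := by
  rw [sqrt_lt' hG, ← sqrt_lt_iff_pos_and_lt_sq]
  constructor <;> intro h <;> linarith

/-- The term `√(ε²/2 + α ε γ c + √(ε⁴/4 + α² ε² γ² + α ε³ γ c))` of the dominant eigenvalue,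
in units of `γ`, as a function of `t = ε / γ`. -/
noncomputable def gain (α c t : ℝ) : ℝ :=
  √(t ^ 2 / 2 + α * t * c + √(t ^ 4 / 4 + α ^ 2 * t ^ 2 + α * t ^ 3 * c))

theorem sqrt_eq_mul_gain {α c t γ : ℝ} (hγ : 0 ≤ γ) :
    √((t * γ) ^ 2 / 2 + α * (t * γ) * γ * c
        + √((t * γ) ^ 4 / 4 + α ^ 2 * (t * γ) ^ 2 * γ ^ 2 + α * (t * γ) ^ 3 * γ * c))
      = γ * gain α c t := by
  have hinner : (t * γ) ^ 4 / 4 + α ^ 2 * (t * γ) ^ 2 * γ ^ 2 + α * (t * γ) ^ 3 * γ * c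
      = (γ ^ 2) ^ 2 * (t ^ 4 / 4 + α ^ 2 * t ^ 2 + α * t ^ 3 * c) := by ring
  rw [hinner, sqrt_mul (by positivity), sqrt_sq (sq_nonneg γ)]
  have houter : (t * γ) ^ 2 / 2 + α * (t * γ) * γ * c
        + γ ^ 2 * √(t ^ 4 / 4 + α ^ 2 * t ^ 2 + α * t ^ 3 * c)
      = γ ^ 2 * (t ^ 2 / 2 + α * t * c + √(t ^ 4 / 4 + α ^ 2 * t ^ 2 + α * t ^ 3 * c)) := by ring
  rw [houter, sqrt_mul (sq_nonneg γ), sqrt_sq hγ, gain]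

theorem gain_lt_iff {α c t B : ℝ} (hc : |c| ≤ 1) (ht : 0 < t) (hB : 0 < B) :
    gain α c t < B ↔ t < B ^ 2 / (√(B ^ 2 + α ^ 2) + α * c) := by
  set s := √(B ^ 2 + α ^ 2)
  have hs : s ^ 2 = B ^ 2 + α ^ 2 := sq_sqrt (by positivity)
  have hc₂ : c ^ 2 ≤ 1 := (sq_le_one_iff_abs_le_one c).mpr hc
  have hαs : |α| < s := by
    rw [← sqrt_sq_eq_abs]
    exact sqrt_lt_sqrt (sq_nonneg α) (by nlinarith)
  have hαc : |α * c| < s := by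
    rw [abs_mul]
    nlinarith [abs_nonneg α]
  obtain ⟨hαc₁, hαc₂⟩ := abs_lt.mp hαc
  have hfactor : (B ^ 2 - (t ^ 2 / 2 + α * t * c)) ^ 2 - (t ^ 4 / 4 + α ^ 2 * t ^ 2 + α * t ^ 3 * c)
      = (B ^ 2 - t * (s + α * c)) * (B ^ 2 + t * (s - α * c)) := by
    linear_combination t ^ 2 * hs
  have hpos : 0 < B ^ 2 + t * (s - α * c) := add_pos (pow_pos hB 2) (mul_pos ht (sub_pos.mpr hαc₂))
  have hden : 0 < s + α * c := by linarith
  rw [gain, sqrt_add_sqrt_lt_iff hB, lt_div_iff₀ hden, ← sub_pos (b := (t ^ 4 / 4 + _ + _)),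
    hfactor, mul_pos_iff_of_pos_right hpos, sub_pos (b := t * _)]
  refine ⟨And.right, fun h => ⟨?_, h⟩⟩
  -- `t < 2 s` because `2 s (s + α c) - B² = (s + α c)² + α² (1 - c²) ≥ 0`
  have hts : t < 2 * s := by
    by_contra! h2s
    nlinarith [sq_nonneg (s + α * c), mul_nonneg (sq_nonneg α) (sub_nonneg.mpr hc₂),
      mul_le_mul_of_nonneg_right h2s hden.le]
  nlinarith [mul_lt_mul_of_pos_left hts ht]

end DualNOPA

open DualNOPA in
theorem stmt14_general (γr x y κ α Δθ : ℝ) (hγr : 0 < γr)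
    (hx₁ : 0 < x) (hy₁ : 0 < y)
    (hκ : 0 ≤ κ)
    (ε γ : ℝ) (hε : ε = x * γr) (hγ : γ = γr / y) :
    (-(γ + κ)/2 + (1/2) * Real.sqrt (ε ^ 2 / 2
        + α * ε * γ * |Real.cos (Δθ / 2)|
        + Real.sqrt (ε ^ 4 / 4 + α ^ 2 * ε ^ 2 * γ ^ 2
            + α * ε ^ 3 * γ * |Real.cos (Δθ / 2)|)) < 0) ↔
    x * y < (1 + y * κ / γr) ^ 2 /
      (Real.sqrt ((1 + y * κ / γr) ^ 2 + α ^ 2) + α * |Real.cos (Δθ / 2)|) := by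
  have hγ₀ : 0 < γ := hγ ▸ div_pos hγr hy₁
  have hB : 0 < 1 + y * κ / γr := by positivity
  have hεt : ε = x * y * γ := by rw [hε, hγ]; field_simp
  have hγκ : γ + κ = γ * (1 + y * κ / γr) := by rw [hγ]; field_simp
  rw [hεt, sqrt_eq_mul_gain hγ₀.le, hγκ,
    ← gain_lt_iff ((abs_abs _).trans_le (Real.abs_cos_le_one _)) (mul_pos hx₁ hy₁) hB]
  constructor <;> intro h <;> nlinarith

theorem stmt14 (γr x y κ α Δθ : ℝ) (hγr : 0 < γr)
    (hx₁ : 0 < x) (hx₂ : x ≤ 1) (hy₁ : 0 < y) (hy₂ : y ≤ 1)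
    (hκ : 0 ≤ κ) (hα₁ : 0 ≤ α) (hα₂ : α ≤ 1)
    (ε γ : ℝ) (hε : ε = x * γr) (hγ : γ = γr / y) :
    (-(γ + κ)/2 + (1/2) * Real.sqrt (ε ^ 2 / 2
        + α * ε * γ * |Real.cos (Δθ / 2)|
        + Real.sqrt (ε ^ 4 / 4 + α ^ 2 * ε ^ 2 * γ ^ 2
            + α * ε ^ 3 * γ * |Real.cos (Δθ / 2)|)) < 0) ↔
    x * y < (1 + y * κ / γr) ^ 2 /
      (Real.sqrt ((1 + y * κ / γr) ^ 2 + α ^ 2) + α * |Real.cos (Δθ / 2)|) :=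
  stmt14_general γr x y κ α Δθ hγr hx₁ hy₁ hκ ε γ hε hγ
end
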